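/- Let X_1, X_2, …, X_t ∈ 𝓢^q be exact and closed, with pairwise disjoint supports. Then the product X_1 * X_2 * ⋯ * X_t is exact and closed. -/

import Mathlib

open Equiv Pointwise

namespace FPS

/-- The support of a permutation of `ℕ`. -/
def psupp (ρ : Equiv.Perm ℕ) : Set ℕ := {ω | ρ ω ≠ ω}

/-- The support of a set of permutations of `ℕ`. -/
def ssupp (X : Set (Equiv.Perm ℕ)) : Set ℕ := ⋃ ρ ∈ X, psupp ρ

/-- `Sym(α)`: the subgroup of permutations of `ℕ` supported on the subset `α`. -/
def symOn (α : Set ℕ) : Subgroup (Equiv.Perm ℕ) where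
  carrier := {g | ∀ ω, ω ∉ α → g ω = ω}
  one_mem' := fun _ _ => rfl
  mul_mem' := by
    intro a b ha hb ω hω
    have hbω := hb ω hω
    have haω := ha ω hω
    show a (b ω) = ω
    rw [hbω, haω]
  inv_mem' := by
    intro a ha ω hω
    have haω := ha ω hω
    show a⁻¹ ω = ω
    nth_rewrite 1 [← haω]
    exact Equiv.symm_apply_apply a ω

/-- Membership in the family `𝓕`: finite nonempty sets of finitary permutations,
different from `{1}`. -/
def memF (X : Set (Equiv.Perm ℕ)) : Prop :=
  X.Finite ∧ X.Nonempty ∧ X ≠ {1} ∧ ∀ ρ ∈ X, (psupp ρ).Finite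

/-- Membership in `𝓢^q`: members of `𝓕` all of whose elements are products of `q`-cycles
(each orbit on the support has size `q`) with full support. -/
def memS (q : ℕ) (X : Set (Equiv.Perm ℕ)) : Prop :=
  memF X ∧ (∀ ρ ∈ X, psupp ρ = ssupp X) ∧
    ∀ ρ ∈ X, ∀ ω ∈ psupp ρ, (Set.range fun n : ℤ => (ρ ^ n) ω).ncard = q

/-- Right conjugation `x ↦ x^g = g⁻¹ x g`. -/
def conjR (g x : Equiv.Perm ℕ) : Equiv.Perm ℕ := g⁻¹ * x * g

/-- Conjugate of a set of permutations: `X^g`. -/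
def conjSet (g : Equiv.Perm ℕ) (X : Set (Equiv.Perm ℕ)) : Set (Equiv.Perm ℕ) := conjR g '' X

/-- The setwise stabilizer (under conjugation) of a set of permutations,
as a subgroup of the full group `Sym(ℕ)`. -/
def setStab (X : Set (Equiv.Perm ℕ)) : Subgroup (Equiv.Perm ℕ) where
  carrier := {g | ∀ x, x ∈ X ↔ g⁻¹ * x * g ∈ X}
  one_mem' := by
    intro x
    simp
  mul_mem' := by
    intro a b ha hb x
    have h1 := ha x
    have h2 := hb (a⁻¹ * x * a)
    have e : b⁻¹ * (a⁻¹ * x * a) * b = (a * b)⁻¹ * x * (a * b) := by group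
    rw [e] at h2
    exact h1.trans h2
  inv_mem' := by
    intro a ha x
    have h := ha (a * x * a⁻¹)
    have e : a⁻¹ * (a * x * a⁻¹) * a = x := by group
    rw [e] at h
    have e2 : a * x * a⁻¹ = a⁻¹⁻¹ * x * a⁻¹ := by group
    rw [e2] at h
    exact h.symm

/-- `N_X`: the stabilizer of `X` in `G_X = Sym(supp X)`. -/
def NX (X : Set (Equiv.Perm ℕ)) : Subgroup (Equiv.Perm ℕ) := symOn (ssupp X) ⊓ setStab X

/-- `S_X = C_{G_X}(X)`: the pointwise centralizer of `X` in `G_X = Sym(supp X)`. -/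
def SX (X : Set (Equiv.Perm ℕ)) : Subgroup (Equiv.Perm ℕ) :=
  symOn (ssupp X) ⊓ Subgroup.centralizer X

/-- `Q` is a Sylow `p`-subgroup of the subgroup `H` (that is, a maximal `p`-subgroup of `H`). -/
def IsSylowOf {G : Type*} [Group G] (p : ℕ) (Q H : Subgroup G) : Prop :=
  Q ≤ H ∧ IsPGroup p Q ∧ ∀ R : Subgroup G, R ≤ H → IsPGroup p R → Q ≤ R → R = Q

/-- `Ξ_X = ⋃_{g ∈ G_X} X^g`. -/
def Xi (X : Set (Equiv.Perm ℕ)) : Set (Equiv.Perm ℕ) :=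
  ⋃ g ∈ (symOn (ssupp X) : Set (Equiv.Perm ℕ)), conjSet g X

/-- `X` is closed: `C_{G_X}(Q_X) ∩ Ξ_X = X` for (any) Sylow `p`-subgroup `Q_X` of `S_X`. -/
def IsClosedSet (p : ℕ) (X : Set (Equiv.Perm ℕ)) : Prop :=
  ∀ Q : Subgroup (Equiv.Perm ℕ), IsSylowOf p Q (SX X) →
    (Subgroup.centralizer (Q : Set (Equiv.Perm ℕ)) : Set (Equiv.Perm ℕ)) ∩ Xi X = X

/-- `X` is exact: `supp Q_X = supp X` for (any) Sylow `p`-subgroup `Q_X` of `S_X`. -/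
def IsExactSet (p : ℕ) (X : Set (Equiv.Perm ℕ)) : Prop :=
  ∀ Q : Subgroup (Equiv.Perm ℕ), IsSylowOf p Q (SX X) →
    ssupp (Q : Set (Equiv.Perm ℕ)) = ssupp X

/-- `X` is projective: `Q_X = 1`. -/
def IsProjectiveSet (p : ℕ) (X : Set (Equiv.Perm ℕ)) : Prop :=
  ∀ Q : Subgroup (Equiv.Perm ℕ), IsSylowOf p Q (SX X) → Q = ⊥

/-- `X ∈ 𝓕` is irreducible if it is not a product of two members of `𝓕`
with disjoint supports. -/
def IsIrred (X : Set (Equiv.Perm ℕ)) : Prop :=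
  memF X ∧ ∀ Y Z : Set (Equiv.Perm ℕ), memF Y → memF Z →
    Disjoint (ssupp Y) (ssupp Z) → X ≠ Y * Z

/-- Two sets of permutations are equivalent if they are conjugate in `Sym(ℕ)`. -/
def EquivSet (X Y : Set (Equiv.Perm ℕ)) : Prop := ∃ g : Equiv.Perm ℕ, conjSet g X = Y

/-- `D` is a realization of `Δ^s X`: the diagonal of a product of `s` disjointly
supported conjugates of `X`. -/
def IsDelta (s : ℕ) (X D : Set (Equiv.Perm ℕ)) : Prop :=
  ∃ g : Fin s → Equiv.Perm ℕ,
    (∀ i j, i ≠ j → Disjoint (ssupp (conjSet (g i) X)) (ssupp (conjSet (g j) X))) ∧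
    D = (fun x => (List.ofFn fun i => conjR (g i) x).prod) '' X

/-- `D` is a realization of the `a`-fold `*`-power `X^a`: a product of `a` disjointly
supported conjugates of `X`. -/
def IsStarPow (a : ℕ) (X D : Set (Equiv.Perm ℕ)) : Prop :=
  ∃ g : Fin a → Equiv.Perm ℕ,
    (∀ i j, i ≠ j → Disjoint (ssupp (conjSet (g i) X)) (ssupp (conjSet (g j) X))) ∧
    D = (List.ofFn fun i => conjSet (g i) X).prod

/-- `X` is a transitive set: `⟨X⟩` is transitive on `supp X`. -/
def TransitiveSet (X : Set (Equiv.Perm ℕ)) : Prop :=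
  ∀ a ∈ ssupp X, ∀ b ∈ ssupp X, ∃ g ∈ Subgroup.closure X, g a = b

lemma mem_setStab {X : Set (Equiv.Perm ℕ)} {g : Equiv.Perm ℕ} :
    g ∈ setStab X ↔ ∀ x, x ∈ X ↔ g⁻¹ * x * g ∈ X := Iff.rfl

lemma conjR_mem {X : Set (Equiv.Perm ℕ)} {g : Equiv.Perm ℕ} (hg : g ∈ setStab X)
    {x : Equiv.Perm ℕ} (hx : x ∈ X) : g⁻¹ * x * g ∈ X :=
  (mem_setStab.mp hg x).mp hx

lemma conjL_mem {X : Set (Equiv.Perm ℕ)} {g : Equiv.Perm ℕ} (hg : g ∈ setStab X)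
    {x : Equiv.Perm ℕ} (hx : x ∈ X) : g * x * g⁻¹ ∈ X := by
  have h := mem_setStab.mp ((setStab X).inv_mem hg) x
  rw [inv_inv] at h
  exact h.mp hx

/-- The permutation of `X` induced by conjugation by an element of `N_X`. -/
def conjPerm (X : Set (Equiv.Perm ℕ)) (g : NX X) : Equiv.Perm X where
  toFun x := ⟨(g : Equiv.Perm ℕ) * x * (g : Equiv.Perm ℕ)⁻¹,
    conjL_mem (Subgroup.mem_inf.mp g.2).2 x.2⟩
  invFun x := ⟨(g : Equiv.Perm ℕ)⁻¹ * x * (g : Equiv.Perm ℕ),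
    conjR_mem (Subgroup.mem_inf.mp g.2).2 x.2⟩
  left_inv x := by
    apply Subtype.ext
    show (g : Equiv.Perm ℕ)⁻¹ * ((g : Equiv.Perm ℕ) * x * (g : Equiv.Perm ℕ)⁻¹) *
      (g : Equiv.Perm ℕ) = x
    group
  right_inv x := by
    apply Subtype.ext
    show (g : Equiv.Perm ℕ) * ((g : Equiv.Perm ℕ)⁻¹ * x * (g : Equiv.Perm ℕ)) *
      (g : Equiv.Perm ℕ)⁻¹ = x
    group

/-- The action of `N_X` on `X` by conjugation, as a homomorphism `N_X →* Sym(X)`. -/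
def MXhom (X : Set (Equiv.Perm ℕ)) : NX X →* Equiv.Perm X where
  toFun := conjPerm X
  map_one' := by
    apply Equiv.ext
    intro x
    apply Subtype.ext
    show ((1 : NX X) : Equiv.Perm ℕ) * x * ((1 : NX X) : Equiv.Perm ℕ)⁻¹ = x
    simp
  map_mul' a b := by
    apply Equiv.ext
    intro x
    apply Subtype.ext
    show ((a * b : NX X) : Equiv.Perm ℕ) * x * ((a * b : NX X) : Equiv.Perm ℕ)⁻¹
      = (a : Equiv.Perm ℕ) * ((b : Equiv.Perm ℕ) * x * (b : Equiv.Perm ℕ)⁻¹) *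
        (a : Equiv.Perm ℕ)⁻¹
    push_cast
    group

/-- `M_X = N_X/S_X`, realized as the image of `N_X` in `Sym(X)` (the action of `N_X`
on `X` is by conjugation, with kernel `S_X`). -/
def MX (X : Set (Equiv.Perm ℕ)) : Subgroup (Equiv.Perm X) := (MXhom X).range

/-- The permutation module `k[Ω]` of the `G`-set `Ω` has a nonzero projective direct summand. -/
def HasProjSummand (k : Type) [Field k] (G : Type*) [Group G] (Ω : Type*) [MulAction G Ω] :
    Prop :=
  ∃ P W : Submodule (MonoidAlgebra k G) (Representation.ofMulAction k G Ω).asModule,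
    IsCompl P W ∧ P ≠ ⊥ ∧ Module.Projective (MonoidAlgebra k G) P

/-- `X` is a fixed point set: `X ∈ 𝓢^q`, `X` is closed, and the permutation
`k M_X`-module `k[X]` has a nonzero projective direct summand. -/
def IsFPS (p q : ℕ) (k : Type) [Field k] (X : Set (Equiv.Perm ℕ)) : Prop :=
  memS q X ∧ IsClosedSet p X ∧ HasProjSummand k (MX X) X

/-- `X` and `Y` (with disjoint supports) are coprime: `N_{X*Y} = N_X × N_Y`. -/
def CoprimeSets (X Y : Set (Equiv.Perm ℕ)) : Prop := NX (X * Y) = NX X ⊔ NX Y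

/-- `X` is projective-free: no factor in a decomposition of `X` into irreducibles
is projective. -/
def ProjFree (p : ℕ) (X : Set (Equiv.Perm ℕ)) : Prop :=
  ∀ L : List (Set (Equiv.Perm ℕ)), (∀ Y ∈ L, IsIrred Y) →
    L.Pairwise (fun A B => Disjoint (ssupp A) (ssupp B)) →
    X = L.prod → ∀ Y ∈ L, ¬ IsProjectiveSet p Y


section Basics

variable {g x ρ σ : Equiv.Perm ℕ} {α β : Set ℕ} {ω : ℕ}

lemma mem_psupp : ω ∈ psupp ρ ↔ ρ ω ≠ ω := Iff.rfl

lemma psupp_one : psupp (1 : Equiv.Perm ℕ) = ∅ := by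
  ext ω; simp [psupp]

lemma psupp_eq_empty_iff : psupp ρ = ∅ ↔ ρ = 1 := by
  constructor
  · intro h; ext ω
    by_contra hne
    exact (Set.eq_empty_iff_forall_notMem.mp h ω) hne
  · rintro rfl; exact psupp_one

lemma psupp_inv : psupp ρ⁻¹ = psupp ρ := by
  ext ω
  simp only [mem_psupp]
  constructor
  · intro h hc
    apply h
    nth_rewrite 1 [← hc]
    exact Equiv.symm_apply_apply ρ ω
  · intro h hc
    exact h (by nth_rewrite 1 [← hc]; exact Equiv.apply_symm_apply ρ ω)

lemma apply_mem_psupp (h : ω ∈ psupp ρ) : ρ ω ∈ psupp ρ := by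
  simp only [mem_psupp] at *
  intro hc; exact h (ρ.injective hc)

lemma psupp_conj : psupp (g * x * g⁻¹) = g '' psupp x := by
  ext ω
  simp only [mem_psupp, Set.mem_image, Equiv.Perm.mul_apply]
  constructor
  · intro h
    refine ⟨g⁻¹ ω, fun hc => h ?_, by simp⟩
    rw [hc]; simp
  · rintro ⟨η, hη, rfl⟩
    rw [show g⁻¹ (g η) = η from Equiv.symm_apply_apply g η]
    exact fun hc => hη (g.injective hc)

lemma mem_symOn : g ∈ symOn α ↔ ∀ ω ∉ α, g ω = ω := Iff.rfl

lemma mem_symOn' : g ∈ symOn α ↔ psupp g ⊆ α := by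
  constructor
  · intro h ω hω; by_contra hc; exact hω (h ω hc)
  · intro h ω hω; by_contra hc; exact hω (h hc)

lemma symOn_mono (h : α ⊆ β) : symOn α ≤ symOn β := by
  intro g hg
  rw [mem_symOn'] at *
  exact hg.trans h

lemma symOn_maps_to (hg : g ∈ symOn α) (hω : ω ∈ α) : g ω ∈ α := by
  by_contra hc
  have := hg _ hc
  have := g.injective this
  rw [this] at hc; exact hc hω

lemma symOn_image (hg : g ∈ symOn α) : g '' α = α := by
  apply Set.eq_of_subset_of_subset
  · rintro _ ⟨ω, hω, rfl⟩; exact symOn_maps_to hg hω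
  · intro ω hω
    exact ⟨g⁻¹ ω, symOn_maps_to ((symOn α).inv_mem hg) hω, Equiv.apply_symm_apply g ω⟩

lemma commute_of_disjoint_psupp {a b : Equiv.Perm ℕ} (h : Disjoint (psupp a) (psupp b)) :
    Commute a b := by
  ext ω
  simp only [Equiv.Perm.mul_apply]
  rcases Classical.em (ω ∈ psupp a) with ha | ha
  · have hb : ω ∉ psupp b := fun hb => (Set.disjoint_left.mp h ha) hb
    have hb' : a ω ∉ psupp b := fun hb => (Set.disjoint_left.mp h (apply_mem_psupp ha)) hb
    rw [not_not.mp hb, not_not.mp hb']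
  · rcases Classical.em (ω ∈ psupp b) with hb | hb
    · have ha' : b ω ∉ psupp a := fun hx => (Set.disjoint_right.mp h (apply_mem_psupp hb)) hx
      rw [not_not.mp ha, not_not.mp ha']
    · simp only [not_not.mp ha, not_not.mp hb]

lemma psupp_mul_subset {a b : Equiv.Perm ℕ} : psupp (a * b) ⊆ psupp a ∪ psupp b := by
  intro ω h
  by_contra hc
  simp only [Set.mem_union, not_or, mem_psupp, not_not] at hc h
  exact h (by rw [Equiv.Perm.mul_apply, hc.2, hc.1])

lemma psupp_mul_disjoint {a b : Equiv.Perm ℕ} (h : Disjoint (psupp a) (psupp b)) :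
    psupp (a * b) = psupp a ∪ psupp b := by
  apply Set.eq_of_subset_of_subset psupp_mul_subset
  intro ω hω
  rcases hω with ha | hb
  · have hb : ω ∉ psupp b := fun hb => (Set.disjoint_left.mp h ha) hb
    simp only [mem_psupp, Equiv.Perm.mul_apply, not_not.mp hb]
    exact ha
  · have hb' : b ω ∈ psupp b := apply_mem_psupp hb
    have ha' : b ω ∉ psupp a := fun hx => (Set.disjoint_right.mp h hb') hx
    simp only [mem_psupp, Equiv.Perm.mul_apply, not_not.mp ha']
    exact hb

lemma psupp_zpow_subset (ρ : Equiv.Perm ℕ) (n : ℤ) : psupp (ρ ^ n) ⊆ psupp ρ := by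
  intro ω h
  by_contra hc
  simp only [mem_psupp, not_not] at hc
  exact h (Equiv.Perm.zpow_apply_eq_self_of_apply_eq_self hc n)

lemma psupp_pow_subset (ρ : Equiv.Perm ℕ) (n : ℕ) : psupp (ρ ^ n) ⊆ psupp ρ := by
  intro ω h
  by_contra hc
  simp only [mem_psupp, not_not] at hc
  exact h (Equiv.Perm.pow_apply_eq_self_of_apply_eq_self hc n)

end Basics

lemma zpow_apply_mem_psupp {f : Equiv.Perm ℕ} (n : ℤ) {ω : ℕ} (hω : ω ∈ psupp f) :
    (f ^ n) ω ∈ psupp f := by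
  by_contra hc
  simp only [mem_psupp, not_not] at hc
  have h2 : (f ^ n) ((f ^ n) ω) = (f ^ n) ω :=
    Equiv.Perm.zpow_apply_eq_self_of_apply_eq_self hc n
  have := (f ^ n).injective h2
  rw [this] at hc
  exact hω hc
section Ssupp

variable {X Y : Set (Equiv.Perm ℕ)} {α : Set ℕ} {g : Equiv.Perm ℕ}

lemma mem_ssupp_iff {ω : ℕ} : ω ∈ ssupp X ↔ ∃ ρ ∈ X, ω ∈ psupp ρ := by
  simp [ssupp]

lemma psupp_subset_ssupp {ρ : Equiv.Perm ℕ} (h : ρ ∈ X) : psupp ρ ⊆ ssupp X :=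
  fun ω hω => mem_ssupp_iff.mpr ⟨ρ, h, hω⟩

lemma ssupp_mono (h : X ⊆ Y) : ssupp X ⊆ ssupp Y := by
  intro ω hω
  rcases mem_ssupp_iff.mp hω with ⟨ρ, hρ, hωρ⟩
  exact mem_ssupp_iff.mpr ⟨ρ, h hρ, hωρ⟩

lemma ssupp_subset_of_le_symOn {Q : Subgroup (Equiv.Perm ℕ)} (h : Q ≤ symOn α) :
    ssupp (Q : Set (Equiv.Perm ℕ)) ⊆ α := by
  intro ω hω
  rcases mem_ssupp_iff.mp hω with ⟨ρ, hρ, hωρ⟩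
  exact mem_symOn'.mp (h hρ) hωρ

lemma ssupp_finite (hX : memF X) : (ssupp X).Finite := by
  exact Set.Finite.biUnion hX.1 (fun ρ hρ => hX.2.2.2 ρ hρ)

lemma ssupp_nonempty (hX : memS q X) : (ssupp X).Nonempty := by
  obtain ⟨ρ, hρ⟩ := hX.1.2.1
  rcases Set.eq_empty_or_nonempty (ssupp X) with he | h
  · exfalso
    apply hX.1.2.2.1
    apply Set.eq_of_subset_of_subset
    · intro σ hσ
      have : psupp σ = ∅ := by rw [hX.2.1 σ hσ, he]
      simp [psupp_eq_empty_iff.mp this]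
    · intro σ hσ
      simp only [Set.mem_singleton_iff] at hσ
      subst hσ
      have : psupp ρ = ∅ := by rw [hX.2.1 ρ hρ, he]
      rw [← psupp_eq_empty_iff.mp this]
      exact hρ
  · exact h

lemma symOn_finite (hα : α.Finite) : (symOn α : Set (Equiv.Perm ℕ)).Finite := by
  haveI : Finite ↥α := hα
  have : Function.Injective (fun g : (symOn α : Set (Equiv.Perm ℕ)) =>
      (fun a : ↥α => (⟨(g : Equiv.Perm ℕ) a, symOn_maps_to g.2 a.2⟩ : ↥α))) := by
    intro g g' h
    apply Subtype.ext
    apply Equiv.ext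
    intro ω
    rcases Classical.em (ω ∈ α) with hω | hω
    · have := congrFun h ⟨ω, hω⟩
      exact Subtype.ext_iff.mp this
    · rw [g.2 ω hω, g'.2 ω hω]
  haveI : Finite ↥(symOn α : Set (Equiv.Perm ℕ)) := Finite.of_injective _ this
  exact Set.toFinite _

end Ssupp

section ListProd

lemma mem_listProd_ofFn {t : ℕ} (Xs : Fin t → Set (Equiv.Perm ℕ)) (z : Equiv.Perm ℕ) :
    z ∈ (List.ofFn Xs).prod ↔
      ∃ x : Fin t → Equiv.Perm ℕ, (∀ i, x i ∈ Xs i) ∧ z = (List.ofFn x).prod := by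
  induction t generalizing z with
  | zero =>
    simp only [List.ofFn_zero, List.prod_nil]
    constructor
    · intro h
      exact ⟨fun i => i.elim0, fun i => i.elim0, by simpa using h⟩
    · rintro ⟨x, -, rfl⟩
      simp
  | succ n ih =>
    rw [List.ofFn_succ, List.prod_cons]
    constructor
    · intro h
      rw [Set.mem_mul] at h
      obtain ⟨a, ha, b, hb, hab⟩ := h
      obtain ⟨x', hx', rfl⟩ := (ih _ _).mp hb
      refine ⟨Fin.cons a x', ?_, ?_⟩
      · intro i
        refine Fin.cases ?_ ?_ i
        · simpa using ha
        · intro j; simpa using hx' j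
      · rw [List.ofFn_succ, List.prod_cons]
        simp only [Fin.cons_zero, Fin.cons_succ]
        exact hab.symm
    · rintro ⟨x, hx, rfl⟩
      rw [List.ofFn_succ, List.prod_cons, Set.mem_mul]
      exact ⟨x 0, hx 0, (List.ofFn fun i => x i.succ).prod,
        (ih _ _).mpr ⟨fun i => x i.succ, fun i => hx i.succ, rfl⟩, rfl⟩

lemma listProd_psupp {l : List (Equiv.Perm ℕ)}
    (hl : l.Pairwise (fun a b => Disjoint (psupp a) (psupp b))) :
    psupp l.prod = ⋃ f ∈ l, psupp f := by
  induction l with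
  | nil => simp [psupp_one]
  | cons a l ih =>
    rw [List.prod_cons]
    have hd : Disjoint (psupp a) (psupp l.prod) := by
      have h1 : psupp l.prod ⊆ ⋃ f ∈ l, psupp f := by
        rw [ih (List.Pairwise.sublist (List.sublist_cons_self a l) hl)]
      rw [Set.disjoint_iff_inter_eq_empty]
      apply Set.eq_empty_iff_forall_notMem.mpr
      rintro ω ⟨hωa, hωp⟩
      have := h1 hωp
      simp only [Set.mem_iUnion] at this
      obtain ⟨f, hf, hωf⟩ := this
      have hdis := (List.pairwise_cons.mp hl).1 f hf
      exact Set.disjoint_left.mp hdis hωa hωf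
    rw [psupp_mul_disjoint hd, ih (List.Pairwise.sublist (List.sublist_cons_self a l) hl)]
    simp

lemma listProd_apply_of_mem {l : List (Equiv.Perm ℕ)}
    (hl : l.Pairwise (fun a b => Disjoint (psupp a) (psupp b)))
    {f : Equiv.Perm ℕ} (hf : f ∈ l) {ω : ℕ} (hω : ω ∈ psupp f) (n : ℤ) :
    (l.prod ^ n) ω = (f ^ n) ω := by
  induction l with
  | nil => simp at hf
  | cons a l ih =>
    rw [List.prod_cons]
    have htail := List.Pairwise.sublist (List.sublist_cons_self a l) hl
    rcases List.mem_cons.mp hf with rfl | hfl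
    · have hd : Disjoint (psupp f) (psupp l.prod) := by
        rw [listProd_psupp htail]
        rw [Set.disjoint_iff_inter_eq_empty]
        apply Set.eq_empty_iff_forall_notMem.mpr
        rintro η ⟨hηa, hηp⟩
        simp only [Set.mem_iUnion] at hηp
        obtain ⟨f', hf', hηf⟩ := hηp
        exact Set.disjoint_left.mp ((List.pairwise_cons.mp hl).1 f' hf') hηa hηf
      have hc : Commute f l.prod := commute_of_disjoint_psupp hd
      rw [hc.mul_zpow]
      simp only [Equiv.Perm.mul_apply]
      have : (l.prod ^ n) ω = ω := by
        by_contra hne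
        have : ω ∈ psupp (l.prod ^ n) := hne
        exact Set.disjoint_left.mp hd hω (psupp_zpow_subset _ n this)
      rw [this]
    · have hd : Disjoint (psupp a) (psupp f) := (List.pairwise_cons.mp hl).1 f hfl
      have hc : Commute a l.prod := by
        apply commute_of_disjoint_psupp
        rw [listProd_psupp htail]
        rw [Set.disjoint_iff_inter_eq_empty]
        apply Set.eq_empty_iff_forall_notMem.mpr
        rintro η ⟨hηa, hηp⟩
        simp only [Set.mem_iUnion] at hηp
        obtain ⟨f', hf', hηf⟩ := hηp
        exact Set.disjoint_left.mp ((List.pairwise_cons.mp hl).1 f' hf') hηa hηf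
      rw [hc.mul_zpow]
      simp only [Equiv.Perm.mul_apply]
      rw [ih htail hfl]
      have hmem : (f ^ n) ω ∈ psupp f := zpow_apply_mem_psupp n hω
      apply Equiv.Perm.zpow_apply_eq_self_of_apply_eq_self
      by_contra hne
      exact Set.disjoint_right.mp hd hmem hne
end ListProd
section SylowMachinery

variable {p : ℕ} [Fact p.Prime]

lemma isPGroup_subgroupOf {H R : Subgroup (Equiv.Perm ℕ)} (hR : IsPGroup p R) (hRH : R ≤ H) :
    IsPGroup p (R.subgroupOf H) :=
  hR.of_equiv (Subgroup.subgroupOfEquivOfLe hRH).symm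

lemma exists_isSylowOf_ge {H R : Subgroup (Equiv.Perm ℕ)} (hfin : (H : Set (Equiv.Perm ℕ)).Finite)
    (hRH : R ≤ H) (hR : IsPGroup p R) : ∃ Q, IsSylowOf p Q H ∧ R ≤ Q := by
  haveI : Finite ↥H := Set.finite_coe_iff.mpr hfin
  obtain ⟨P, hP⟩ := (isPGroup_subgroupOf hR hRH).exists_le_sylow
  refine ⟨(P : Subgroup ↥H).map H.subtype, ⟨Subgroup.map_subtype_le _, P.isPGroup'.map _, ?_⟩, ?_⟩
  · intro R2 hR2H hR2p hQR2
    have h1 : (P : Subgroup ↥H) ≤ R2.subgroupOf H := by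
      exact Subgroup.map_le_iff_le_comap.mp hQR2
    have h2 : R2.subgroupOf H = (P : Subgroup ↥H) :=
      P.is_maximal' (isPGroup_subgroupOf hR2p hR2H) h1
    calc R2 = (R2.subgroupOf H).map H.subtype := by
            rw [Subgroup.subgroupOf_map_subtype]; exact (inf_eq_left.mpr hR2H).symm
      _ = (P : Subgroup ↥H).map H.subtype := by rw [h2]
  · calc R = (R.subgroupOf H).map H.subtype := by
            rw [Subgroup.subgroupOf_map_subtype]; exact (inf_eq_left.mpr hRH).symm
      _ ≤ (P : Subgroup ↥H).map H.subtype := Subgroup.map_mono hP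

/-- Build a `Sylow` structure in `↥H` from an `IsSylowOf`. -/
noncomputable def sylowOfIsSylowOf {H Q : Subgroup (Equiv.Perm ℕ)} (hQ : IsSylowOf p Q H) :
    Sylow p ↥H where
  toSubgroup := Q.subgroupOf H
  isPGroup' := isPGroup_subgroupOf hQ.2.1 hQ.1
  is_maximal' := by
    intro P2 hP2 hle
    have h1 : Q ≤ P2.map H.subtype := by
      calc Q = (Q.subgroupOf H).map H.subtype := by
            rw [Subgroup.subgroupOf_map_subtype]; exact (inf_eq_left.mpr hQ.1).symm
        _ ≤ P2.map H.subtype := Subgroup.map_mono hle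
    have h2 : P2.map H.subtype = Q :=
      hQ.2.2 _ (Subgroup.map_subtype_le _) (hP2.map _) h1
    calc P2 = (P2.map H.subtype).comap H.subtype :=
          (Subgroup.comap_map_eq_self_of_injective H.subtype_injective _).symm
      _ = Q.subgroupOf H := by rw [h2]; rfl

lemma isSylowOf_conj {H Q Q' : Subgroup (Equiv.Perm ℕ)}
    (hfin : (H : Set (Equiv.Perm ℕ)).Finite)
    (hQ : IsSylowOf p Q H) (hQ' : IsSylowOf p Q' H) :
    ∃ g ∈ H, ∀ x, x ∈ Q' ↔ g⁻¹ * x * g ∈ Q := by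
  haveI : Finite ↥H := Set.finite_coe_iff.mpr hfin
  obtain ⟨h, hh⟩ := MulAction.exists_smul_eq ↥H (sylowOfIsSylowOf hQ) (sylowOfIsSylowOf hQ')
  refine ⟨(h : Equiv.Perm ℕ), h.2, fun x => ?_⟩
  constructor
  · intro hx
    have hxH : x ∈ H := hQ'.1 hx
    have hmem : (⟨x, hxH⟩ : ↥H) ∈ (h • sylowOfIsSylowOf hQ : Sylow p ↥H) := by
      rw [hh]
      exact hx
    have hmem2 : (⟨x, hxH⟩ : ↥H) ∈
        MulAut.conj h • ((sylowOfIsSylowOf hQ : Sylow p ↥H) : Subgroup ↥H) := hmem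
    rw [Subgroup.mem_pointwise_smul_iff_inv_smul_mem] at hmem2
    have : ((MulAut.conj h)⁻¹ (⟨x, hxH⟩ : ↥H) : Equiv.Perm ℕ) ∈ Q := hmem2
    simpa [MulAut.conj_inv_apply, mul_assoc] using this
  · intro hx
    have hgH : (h : Equiv.Perm ℕ)⁻¹ * x * h ∈ H := hQ.1 hx
    have hxH : x ∈ H := by
      have h1 : (h : Equiv.Perm ℕ) * ((h : Equiv.Perm ℕ)⁻¹ * x * h) * (h : Equiv.Perm ℕ)⁻¹ = x := by
        group
      rw [← h1]
      exact H.mul_mem (H.mul_mem h.2 hgH) (H.inv_mem h.2)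
    have hmem : (⟨x, hxH⟩ : ↥H) ∈ (h • sylowOfIsSylowOf hQ : Sylow p ↥H) := by
      show (⟨x, hxH⟩ : ↥H) ∈
        MulAut.conj h • ((sylowOfIsSylowOf hQ : Sylow p ↥H) : Subgroup ↥H)
      rw [Subgroup.mem_pointwise_smul_iff_inv_smul_mem]
      show ((MulAut.conj h)⁻¹ (⟨x, hxH⟩ : ↥H) : Equiv.Perm ℕ) ∈ Q
      simpa [MulAut.conj_inv_apply, mul_assoc] using hx
    rw [hh] at hmem
    exact hmem

end SylowMachinery
section PGroupSup

variable {p : ℕ}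

lemma coe_pow_eq_one_of_isPGroup {H : Subgroup (Equiv.Perm ℕ)} (hH : IsPGroup p H)
    {h : Equiv.Perm ℕ} (hh : h ∈ H) : ∃ a : ℕ, h ^ p ^ a = 1 := by
  obtain ⟨a, ha⟩ := hH ⟨h, hh⟩
  refine ⟨a, ?_⟩
  have := Subtype.ext_iff.mp ha
  push_cast at this
  exact this

lemma isPGroup_sup_of_centralizer {H K : Subgroup (Equiv.Perm ℕ)}
    (hH : IsPGroup p H) (hK : IsPGroup p K)
    (hc : K ≤ Subgroup.centralizer (H : Set (Equiv.Perm ℕ))) :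
    IsPGroup p ((H ⊔ K : Subgroup (Equiv.Perm ℕ))) := by
  have hcomm : ∀ h ∈ H, ∀ k ∈ K, Commute h k := by
    intro h hh k hk
    exact (Subgroup.mem_centralizer_iff.mp (hc hk) h hh)
  set S₀ : Subgroup (Equiv.Perm ℕ) :=
    { carrier := {x | ∃ h ∈ H, ∃ k ∈ K, h * k = x}
      one_mem' := ⟨1, H.one_mem, 1, K.one_mem, mul_one 1⟩
      mul_mem' := by
        rintro a b ⟨h, hh, k, hk, rfl⟩ ⟨h', hh', k', hk', rfl⟩
        refine ⟨h * h', H.mul_mem hh hh', k * k', K.mul_mem hk hk', ?_⟩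
        have : k * h' = h' * k := (hcomm h' hh' k hk).symm
        calc h * h' * (k * k') = h * (h' * k) * k' := by group
          _ = h * (k * h') * k' := by rw [this]
          _ = h * k * (h' * k') := by group
      inv_mem' := by
        rintro a ⟨h, hh, k, hk, rfl⟩
        refine ⟨h⁻¹, H.inv_mem hh, k⁻¹, K.inv_mem hk, ?_⟩
        have : Commute h k := hcomm h hh k hk
        rw [mul_inv_rev]
        exact this.inv_inv
    } with hS₀
  have hle : H ⊔ K ≤ S₀ := by
    apply sup_le
    · intro h hh; exact ⟨h, hh, 1, K.one_mem, mul_one h⟩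
    · intro k hk; exact ⟨1, H.one_mem, k, hk, one_mul k⟩
  intro g
  obtain ⟨h, hh, k, hk, hhk⟩ := hle g.2
  obtain ⟨a, ha⟩ := coe_pow_eq_one_of_isPGroup hH hh
  obtain ⟨b, hb⟩ := coe_pow_eq_one_of_isPGroup hK hk
  refine ⟨a + b, ?_⟩
  apply Subtype.ext
  push_cast
  rw [← hhk]
  have hcm : Commute h k := hcomm h hh k hk
  rw [hcm.mul_pow]
  have h1 : h ^ p ^ (a + b) = 1 := by
    rw [pow_add, pow_mul, ha, one_pow]
  have h2 : k ^ p ^ (a + b) = 1 := by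
    rw [pow_add, mul_comm (p ^ a), pow_mul, hb, one_pow]
  rw [h1, h2, one_mul]

lemma isPGroup_iSup_fin {t : ℕ} (Qf : Fin t → Subgroup (Equiv.Perm ℕ))
    (h1 : ∀ i, IsPGroup p (Qf i))
    (hc : ∀ i j, i ≠ j → Qf j ≤ Subgroup.centralizer ((Qf i : Set (Equiv.Perm ℕ)))) :
    IsPGroup p ((⨆ i, Qf i : Subgroup (Equiv.Perm ℕ))) := by
  induction t with
  | zero =>
    rw [iSup_of_empty]
    exact IsPGroup.of_bot
  | succ n ih =>
    have heq : (⨆ i, Qf i : Subgroup (Equiv.Perm ℕ)) = Qf 0 ⊔ ⨆ i : Fin n, Qf i.succ := by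
      apply le_antisymm
      · apply iSup_le
        intro i
        refine Fin.cases ?_ ?_ i
        · exact le_sup_left
        · intro j
          exact le_trans (le_iSup (fun i : Fin n => Qf i.succ) j) le_sup_right
      · apply sup_le
        · exact le_iSup Qf 0
        · exact iSup_le fun j => le_iSup Qf j.succ
    rw [heq]
    apply isPGroup_sup_of_centralizer (h1 0)
    · exact ih (fun i => Qf i.succ) (fun i => h1 i.succ)
        (fun i j hij => hc i.succ j.succ (fun hcon => hij (Fin.succ_injective n hcon)))
    · apply iSup_le
      intro j
      exact hc 0 j.succ (Fin.succ_ne_zero j).symm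

end PGroupSup
section CycleConj

open Equiv.Perm

lemma psupp_invariant_iff {τ : Equiv.Perm ℕ} {α : Set ℕ} (hτs : psupp τ = α) :
    ∀ ω, ω ∈ α ↔ τ ω ∈ α := by
  intro ω
  constructor
  · intro hω; rw [← hτs] at *; exact apply_mem_psupp hω
  · intro hω
    by_contra hc
    rw [← hτs] at hc hω
    simp only [mem_psupp, not_not] at hc
    rw [hc] at hω
    exact hω hc

lemma cycleType_subtypePerm_replicate {α : Set ℕ} [Fintype ↥α] {q : ℕ} (hq : 2 ≤ q)
    {τ : Equiv.Perm ℕ} (hτs : psupp τ = α)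
    (hτq : ∀ ω ∈ α, (Set.range fun n : ℤ => (τ ^ n) ω).ncard = q) :
    (τ.subtypePerm (fun ω => (psupp_invariant_iff hτs ω).symm)).cycleType
      = Multiset.replicate (Fintype.card ↥α / q) q := by
  classical
  set τ' : Equiv.Perm ↥α := τ.subtypePerm (fun ω => (psupp_invariant_iff hτs ω).symm) with hτ'
  have hsupport : τ'.support = Finset.univ := by
    apply Finset.eq_univ_iff_forall.mpr
    intro x
    rw [Equiv.Perm.mem_support]
    intro hc
    have : τ (x : ℕ) = (x : ℕ) := Subtype.ext_iff.mp hc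
    have hx : (x : ℕ) ∈ psupp τ := by rw [hτs]; exact x.2
    exact hx this
  have hall : ∀ n ∈ τ'.cycleType, n = q := by
    intro n hn
    rw [Equiv.Perm.cycleType_def, Multiset.mem_map] at hn
    obtain ⟨c, hc, rfl⟩ := hn
    have hcyc := (Equiv.Perm.mem_cycleFactorsFinset_iff.mp (by exact hc)).1
    obtain ⟨a, ha⟩ : c.support.Nonempty := by
      rw [← Finset.card_pos]
      exact lt_of_lt_of_le Nat.zero_lt_two hcyc.two_le_card_support
    have hceq : c = τ'.cycleOf a := Equiv.Perm.cycle_is_cycleOf ha hc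
    have hasupp : a ∈ τ'.support := by rw [hsupport]; exact Finset.mem_univ a
    have hset : (c.support : Set ↥α) = Set.range fun n : ℤ => (τ' ^ n) a := by
      ext y
      rw [Finset.mem_coe, hceq, Equiv.Perm.mem_support_cycleOf_iff]
      constructor
      · rintro ⟨⟨i, hi⟩, -⟩; exact ⟨i, hi⟩
      · rintro ⟨i, hi⟩; exact ⟨⟨i, hi⟩, hasupp⟩
    have hcard : (Finset.card ∘ Equiv.Perm.support) c = q := by
      have h1 : c.support.card = ((c.support : Set ↥α)).ncard := (Set.ncard_coe_finset _).symm
      have h2 : ((Set.range fun n : ℤ => (τ' ^ n) a) : Set ↥α).ncard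
          = ((Set.range fun n : ℤ => (τ ^ n) (a : ℕ)) : Set ℕ).ncard := by
        rw [← Set.ncard_image_of_injective _ Subtype.val_injective]
        congr 1
        ext y
        constructor
        · rintro ⟨z, ⟨i, rfl⟩, rfl⟩
          refine ⟨i, ?_⟩
          simp [hτ', Equiv.Perm.subtypePerm_zpow, Equiv.Perm.subtypePerm_apply]
        · rintro ⟨i, rfl⟩
          refine ⟨(τ' ^ i) a, ⟨i, rfl⟩, ?_⟩
          simp [hτ', Equiv.Perm.subtypePerm_zpow, Equiv.Perm.subtypePerm_apply]
      simp only [Function.comp_apply]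
      rw [h1, hset, h2]
      exact hτq (a : ℕ) a.2
    exact hcard
  have hrepl : τ'.cycleType = Multiset.replicate (Multiset.card τ'.cycleType) q :=
    Multiset.eq_replicate_of_mem hall
  have hsum : τ'.cycleType.sum = Fintype.card ↥α := by
    rw [Equiv.Perm.sum_cycleType, hsupport, Finset.card_univ]
  rw [hrepl] at hsum ⊢
  rw [Multiset.sum_replicate, smul_eq_mul] at hsum
  congr 1
  exact (Nat.div_eq_of_eq_mul_left (by omega) hsum.symm).symm

lemma conj_symOn_of_qcycles {α : Set ℕ} (hα : α.Finite) {q : ℕ} (hq : 2 ≤ q)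
    {ρ σ : Equiv.Perm ℕ}
    (hρs : psupp ρ = α) (hσs : psupp σ = α)
    (hρq : ∀ ω ∈ α, (Set.range fun n : ℤ => (ρ ^ n) ω).ncard = q)
    (hσq : ∀ ω ∈ α, (Set.range fun n : ℤ => (σ ^ n) ω).ncard = q) :
    ∃ h ∈ symOn α, h⁻¹ * σ * h = ρ := by
  classical
  haveI : Fintype ↥α := hα.fintype
  have h1 := cycleType_subtypePerm_replicate hq hρs hρq
  have h2 := cycleType_subtypePerm_replicate hq hσs hσq
  have hconj : IsConj (σ.subtypePerm (fun ω => (psupp_invariant_iff hσs ω).symm))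
      (ρ.subtypePerm (fun ω => (psupp_invariant_iff hρs ω).symm)) :=
    Equiv.Perm.isConj_of_cycleType_eq (h2.trans h1.symm)
  obtain ⟨c, hc⟩ := isConj_iff.mp hconj
  have hρof : Equiv.Perm.ofSubtype (ρ.subtypePerm (fun ω => (psupp_invariant_iff hρs ω).symm)) = ρ :=
    Equiv.Perm.ofSubtype_subtypePerm _ (fun x hx => by rw [← hρs] at *; exact hx)
  have hσof : Equiv.Perm.ofSubtype (σ.subtypePerm (fun ω => (psupp_invariant_iff hσs ω).symm)) = σ :=
    Equiv.Perm.ofSubtype_subtypePerm _ (fun x hx => by rw [← hσs] at *; exact hx)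
  refine ⟨(Equiv.Perm.ofSubtype c)⁻¹, (symOn α).inv_mem ?_, ?_⟩
  · rw [mem_symOn]
    intro ω hω
    exact Equiv.Perm.ofSubtype_apply_of_not_mem c hω
  · rw [inv_inv]
    have := congrArg Equiv.Perm.ofSubtype hc
    rw [map_mul, map_mul, map_inv, hσof, hρof] at this
    rw [← this]
end CycleConj
section ProductFacts

variable {q t : ℕ} {Xs : Fin t → Set (Equiv.Perm ℕ)}

lemma pairwise_disjoint_psupp_ofFn (hXs : ∀ i, memS q (Xs i))
    (hdisj : ∀ i j, i ≠ j → Disjoint (ssupp (Xs i)) (ssupp (Xs j)))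
    {x : Fin t → Equiv.Perm ℕ} (hx : ∀ i, x i ∈ Xs i) :
    (List.ofFn x).Pairwise (fun a b => Disjoint (psupp a) (psupp b)) := by
  rw [List.pairwise_ofFn]
  intro i j hij
  rw [(hXs i).2.1 (x i) (hx i), (hXs j).2.1 (x j) (hx j)]
  exact hdisj i j (ne_of_lt hij)

lemma psupp_prod_eq (hXs : ∀ i, memS q (Xs i))
    (hdisj : ∀ i j, i ≠ j → Disjoint (ssupp (Xs i)) (ssupp (Xs j)))
    {x : Fin t → Equiv.Perm ℕ} (hx : ∀ i, x i ∈ Xs i) :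
    psupp ((List.ofFn x).prod) = ⋃ i, ssupp (Xs i) := by
  rw [listProd_psupp (pairwise_disjoint_psupp_ofFn hXs hdisj hx)]
  apply Set.eq_of_subset_of_subset
  · intro ω hω
    simp only [Set.mem_iUnion] at hω ⊢
    obtain ⟨f, hf, hωf⟩ := hω
    obtain ⟨i, rfl⟩ := Set.mem_range.mp (List.mem_ofFn.mp hf)
    exact ⟨i, ((hXs i).2.1 (x i) (hx i)) ▸ hωf⟩
  · intro ω hω
    simp only [Set.mem_iUnion] at hω ⊢
    obtain ⟨i, hωi⟩ := hω
    exact ⟨x i, List.mem_ofFn.mpr (Set.mem_range.mpr ⟨i, rfl⟩), ((hXs i).2.1 (x i) (hx i)).symm ▸ hωi⟩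

lemma ssupp_prod_eq (hXs : ∀ i, memS q (Xs i))
    (hdisj : ∀ i j, i ≠ j → Disjoint (ssupp (Xs i)) (ssupp (Xs j))) :
    ssupp ((List.ofFn Xs).prod) = ⋃ i, ssupp (Xs i) := by
  apply Set.eq_of_subset_of_subset
  · intro ω hω
    obtain ⟨z, hz, hωz⟩ := mem_ssupp_iff.mp hω
    obtain ⟨x, hx, rfl⟩ := (mem_listProd_ofFn Xs z).mp hz
    rw [psupp_prod_eq hXs hdisj hx] at hωz
    exact hωz
  · intro ω hω
    have hchoice : ∀ i, ∃ y, y ∈ Xs i := fun i => (hXs i).1.2.1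
    choose x hx using hchoice
    apply mem_ssupp_iff.mpr
    refine ⟨(List.ofFn x).prod, (mem_listProd_ofFn Xs _).mpr ⟨x, hx, rfl⟩, ?_⟩
    rw [psupp_prod_eq hXs hdisj hx]
    exact hω

end ProductFacts
section Core

lemma closed_core {p q t : ℕ} (hq : 2 ≤ q)
    {Xs : Fin t → Set (Equiv.Perm ℕ)} (hXs : ∀ i, memS q (Xs i))
    (hdisj : ∀ i j, i ≠ j → Disjoint (ssupp (Xs i)) (ssupp (Xs j)))
    (hclosed : ∀ i, IsClosedSet p (Xs i))
    (Qi : Fin t → Subgroup (Equiv.Perm ℕ)) (hQi : ∀ i, IsSylowOf p (Qi i) (SX (Xs i)))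
    (hQisupp : ∀ i, ssupp ((Qi i : Set (Equiv.Perm ℕ))) = ssupp (Xs i))
    {ξ : Equiv.Perm ℕ} (hcent : ∀ i, ∀ ρ ∈ Qi i, ρ * ξ = ξ * ρ)
    (hξXi : ξ ∈ Xi ((List.ofFn Xs).prod)) :
    ξ ∈ ((List.ofFn Xs).prod : Set (Equiv.Perm ℕ)) := by
  classical
  set A : Set ℕ := ⋃ i, ssupp (Xs i) with hA
  -- unpack ξ ∈ Ξ
  simp only [Xi, Set.mem_iUnion, conjSet, Set.mem_image] at hξXi
  obtain ⟨h, hh, z, hz, hξ⟩ := hξXi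
  obtain ⟨x, hx, hzx⟩ := (mem_listProd_ofFn Xs z).mp hz
  have hpair := pairwise_disjoint_psupp_ofFn hXs hdisj hx
  have hzsupp : psupp z = A := by rw [hzx]; exact psupp_prod_eq hXs hdisj hx
  have hhA : h ∈ symOn A := by
    have := ssupp_prod_eq hXs hdisj
    rw [← hA] at this
    rw [this] at hh
    exact hh
  -- commuting facts
  have hcomm : ∀ i, ∀ ρ ∈ Qi i, ∀ ω, ρ (ξ ω) = ξ (ρ ω) := by
    intro i ρ hρ ω
    have := hcent i ρ hρ
    calc ρ (ξ ω) = (ρ * ξ) ω := rfl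
      _ = (ξ * ρ) ω := by rw [this]
      _ = ξ (ρ ω) := rfl
  have hcomminv : ∀ i, ∀ ρ ∈ Qi i, ∀ ω, ρ (ξ⁻¹ ω) = ξ⁻¹ (ρ ω) := by
    intro i ρ hρ ω
    have h1 : ρ * ξ⁻¹ = ξ⁻¹ * ρ := by
      have := hcent i ρ hρ
      calc ρ * ξ⁻¹ = ξ⁻¹ * (ξ * ρ) * ξ⁻¹ := by group
        _ = ξ⁻¹ * (ρ * ξ) * ξ⁻¹ := by rw [this]
        _ = ξ⁻¹ * ρ := by group
    calc ρ (ξ⁻¹ ω) = (ρ * ξ⁻¹) ω := rfl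
      _ = (ξ⁻¹ * ρ) ω := by rw [h1]
      _ = ξ⁻¹ (ρ ω) := rfl
  -- ξ preserves each ssupp (Xs i)
  have hfwd : ∀ (ζ : Equiv.Perm ℕ), (∀ i, ∀ ρ ∈ Qi i, ∀ ω, ρ (ζ ω) = ζ (ρ ω)) →
      ∀ i, ∀ ω ∈ ssupp (Xs i), ζ ω ∈ ssupp (Xs i) := by
    intro ζ hζ i ω hω
    rw [← hQisupp i] at hω ⊢
    obtain ⟨ρ, hρ, hωρ⟩ := mem_ssupp_iff.mp hω
    refine mem_ssupp_iff.mpr ⟨ρ, hρ, ?_⟩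
    rw [mem_psupp, hζ i ρ hρ ω]
    intro hcon
    exact hωρ (ζ.injective hcon)
  have hinv_iff : ∀ i, ∀ ω, ω ∈ ssupp (Xs i) ↔ ξ ω ∈ ssupp (Xs i) := by
    intro i ω
    constructor
    · exact hfwd ξ hcomm i ω
    · intro hω
      have := hfwd ξ⁻¹ hcomminv i (ξ ω) hω
      rwa [show ξ⁻¹ (ξ ω) = ω from Equiv.symm_apply_apply ξ ω] at this
  have hξsupp : psupp ξ = A := by
    rw [← hξ]
    show psupp (h⁻¹ * z * h) = A
    have : h⁻¹ * z * h = h⁻¹ * z * (h⁻¹)⁻¹ := by rw [inv_inv]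
    rw [this, psupp_conj, hzsupp, symOn_image ((symOn A).inv_mem hhA)]
  -- the restrictions
  set ξi : Fin t → Equiv.Perm ℕ :=
    fun i => Equiv.Perm.ofSubtype (ξ.subtypePerm (fun ω => (hinv_iff i ω).symm)) with hξidef
  have hξi_mem : ∀ i, ∀ ω ∈ ssupp (Xs i), ξi i ω = ξ ω := by
    intro i ω hω
    rw [hξidef]
    simp only
    rw [Equiv.Perm.ofSubtype_apply_of_mem _ hω]
    rfl
  have hξi_not : ∀ i, ∀ ω, ω ∉ ssupp (Xs i) → ξi i ω = ω := by
    intro i ω hω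
    rw [hξidef]
    simp only
    rw [Equiv.Perm.ofSubtype_apply_of_not_mem _ hω]
  have hξi_psupp : ∀ i, psupp (ξi i) = ssupp (Xs i) := by
    intro i
    apply Set.eq_of_subset_of_subset
    · intro ω hω
      by_contra hc
      exact hω (hξi_not i ω hc)
    · intro ω hω
      rw [mem_psupp, hξi_mem i ω hω]
      have : ω ∈ psupp ξ := by rw [hξsupp]; exact Set.mem_iUnion.mpr ⟨i, hω⟩
      exact this
  have hξi_zpow : ∀ i (n : ℤ), ∀ ω ∈ ssupp (Xs i), (ξi i ^ n) ω = (ξ ^ n) ω := by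
    intro i n ω hω
    rw [hξidef]
    simp only
    rw [← map_zpow, Equiv.Perm.subtypePerm_zpow]
    rw [Equiv.Perm.ofSubtype_apply_of_mem _ hω]
    rfl
  have hξ_zpow : ∀ (n : ℤ) ω, (ξ ^ n) ω = h⁻¹ ((z ^ n) (h ω)) := by
    intro n ω
    have h1 : ξ = h⁻¹ * z * (h⁻¹)⁻¹ := by rw [inv_inv, ← hξ]; rfl
    have h2 : ξ ^ n = h⁻¹ * z ^ n * (h⁻¹)⁻¹ := by rw [h1, conj_zpow]
    rw [h2]
    simp [Equiv.Perm.mul_apply]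
  have hξi_orbit : ∀ i, ∀ ω ∈ ssupp (Xs i),
      (Set.range fun n : ℤ => ((ξi i) ^ n) ω).ncard = q := by
    intro i ω hω
    have e1 : (Set.range fun n : ℤ => ((ξi i) ^ n) ω)
        = Set.range fun n : ℤ => (ξ ^ n) ω := by
      ext y
      simp only [Set.mem_range]
      constructor
      · rintro ⟨n, hn⟩; exact ⟨n, by rw [← hξi_zpow i n ω hω]; exact hn⟩
      · rintro ⟨n, hn⟩; exact ⟨n, by rw [hξi_zpow i n ω hω]; exact hn⟩
    have hωA : ω ∈ psupp ξ := by rw [hξsupp]; exact Set.mem_iUnion.mpr ⟨i, hω⟩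
    have hhω : h ω ∈ psupp z := by
      rw [mem_psupp]
      intro hcon
      apply hωA
      rw [← hξ]
      show (h⁻¹ * z * h) ω = ω
      simp only [Equiv.Perm.mul_apply, hcon]
      exact Equiv.symm_apply_apply h ω
    obtain ⟨j, hj⟩ : ∃ j, h ω ∈ psupp (x j) := by
      rw [hzsupp] at hhω
      obtain ⟨j, hωj⟩ := Set.mem_iUnion.mp hhω
      exact ⟨j, ((hXs j).2.1 (x j) (hx j)).symm ▸ hωj⟩
    have hz_apply : ∀ n : ℤ, (z ^ n) (h ω) = ((x j) ^ n) (h ω) := by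
      intro n
      rw [hzx]
      exact listProd_apply_of_mem hpair
        (List.mem_ofFn.mpr (Set.mem_range.mpr ⟨j, rfl⟩)) hj n
    have e2 : (Set.range fun n : ℤ => (ξ ^ n) ω)
        = (h⁻¹ : Equiv.Perm ℕ) '' (Set.range fun n : ℤ => ((x j) ^ n) (h ω)) := by
      ext y
      simp only [Set.mem_range, Set.mem_image]
      constructor
      · rintro ⟨n, hn⟩
        exact ⟨((x j) ^ n) (h ω), ⟨n, rfl⟩, by rw [← hn, hξ_zpow n ω, hz_apply n]⟩
      · rintro ⟨u, ⟨n, hn⟩, hu⟩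
        exact ⟨n, by rw [hξ_zpow n ω, hz_apply n, hn, hu]⟩
    rw [e1, e2, Set.ncard_image_of_injective _ (Equiv.injective _)]
    exact (hXs j).2.2 (x j) (hx j) (h ω) hj
  -- each restriction lies in X_i
  have hξi_inX : ∀ i, ξi i ∈ Xs i := by
    intro i
    have hσs : psupp (x i) = ssupp (Xs i) := (hXs i).2.1 (x i) (hx i)
    obtain ⟨c, hc, hcc⟩ := conj_symOn_of_qcycles (ssupp_finite (hXs i).1) hq
      (hξi_psupp i) hσs (hξi_orbit i)
      (fun ω hω => (hXs i).2.2 (x i) (hx i) ω (hσs.symm ▸ hω))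
    have hXiMem : ξi i ∈ Xi (Xs i) := by
      simp only [Xi, Set.mem_iUnion, conjSet, Set.mem_image]
      exact ⟨c, hc, x i, hx i, hcc⟩
    have hCent : ξi i ∈ (Subgroup.centralizer ((Qi i : Set (Equiv.Perm ℕ)))
        : Set (Equiv.Perm ℕ)) := by
      apply Subgroup.mem_centralizer_iff.mpr
      intro ρ hρ
      have hρX : ρ ∈ SX (Xs i) := (hQi i).1 hρ
      have hρsym : ρ ∈ symOn (ssupp (Xs i)) := (Subgroup.mem_inf.mp hρX).1
      apply Equiv.ext
      intro ω
      simp only [Equiv.Perm.mul_apply]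
      by_cases hω : ω ∈ ssupp (Xs i)
      · rw [hξi_mem i ω hω, hξi_mem i (ρ ω) (symOn_maps_to hρsym hω)]
        exact hcomm i ρ hρ ω
      · rw [hρsym ω hω, hξi_not i ω hω, hρsym ω hω]
    have hcls := hclosed i (Qi i) (hQi i)
    rw [← hcls]
    exact ⟨hCent, hXiMem⟩
  -- assemble
  have hpairξ : (List.ofFn ξi).Pairwise (fun a b => Disjoint (psupp a) (psupp b)) := by
    rw [List.pairwise_ofFn]
    intro i j hij
    rw [hξi_psupp i, hξi_psupp j]
    exact hdisj i j (ne_of_lt hij)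
  refine (mem_listProd_ofFn Xs ξ).mpr ⟨ξi, hξi_inX, ?_⟩
  apply Equiv.ext
  intro ω
  by_cases hω : ω ∈ A
  · obtain ⟨i, hωi⟩ := Set.mem_iUnion.mp hω
    have h1 : ((List.ofFn ξi).prod ^ (1 : ℤ)) ω = ((ξi i) ^ (1 : ℤ)) ω :=
      listProd_apply_of_mem hpairξ (List.mem_ofFn.mpr (Set.mem_range.mpr ⟨i, rfl⟩))
        ((hξi_psupp i).symm ▸ hωi) 1
    simp only [zpow_one] at h1
    rw [h1, hξi_mem i ω hωi]
  · have h1 : (List.ofFn ξi).prod ω = ω := by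
      by_contra hc
      have : ω ∈ psupp ((List.ofFn ξi).prod) := hc
      rw [listProd_psupp hpairξ] at this
      simp only [Set.mem_iUnion] at this
      obtain ⟨f, hf, hωf⟩ := this
      obtain ⟨i, rfl⟩ := Set.mem_range.mp (List.mem_ofFn.mp hf)
      rw [hξi_psupp i] at hωf
      exact hω (Set.mem_iUnion.mpr ⟨i, hωf⟩)
    have h2 : ξ ω = ω := by
      by_contra hc
      have : ω ∈ psupp ξ := hc
      rw [hξsupp] at this
      exact hω this
    rw [h2, h1]

end Core

/-- If `X₁, …, X_t ∈ 𝓢^q` are exact and closed, with pairwise disjoint supports,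
then the product `X₁ * X₂ * ⋯ * X_t` is exact and closed. -/
theorem stmt_7 (p q : ℕ) (hp : p.Prime) (hq : 2 ≤ q) (t : ℕ) (ht : 1 ≤ t)
    (Xs : Fin t → Set (Equiv.Perm ℕ)) (hXs : ∀ i, memS q (Xs i))
    (hdisj : ∀ i j, i ≠ j → Disjoint (ssupp (Xs i)) (ssupp (Xs j)))
    (hexact : ∀ i, IsExactSet p (Xs i))
    (hclosed : ∀ i, IsClosedSet p (Xs i)) :
    IsExactSet p ((List.ofFn Xs).prod) ∧ IsClosedSet p ((List.ofFn Xs).prod) := by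
  classical
  haveI : Fact p.Prime := ⟨hp⟩
  set Z : Set (Equiv.Perm ℕ) := (List.ofFn Xs).prod with hZdef
  have hAeq : ssupp Z = ⋃ i, ssupp (Xs i) := ssupp_prod_eq hXs hdisj
  have hαfin : ∀ i, (ssupp (Xs i)).Finite := fun i => ssupp_finite (hXs i).1
  have hAfin : (ssupp Z).Finite := by rw [hAeq]; exact Set.finite_iUnion hαfin
  have hSfin : ((SX Z : Subgroup (Equiv.Perm ℕ)) : Set (Equiv.Perm ℕ)).Finite := by
    apply Set.Finite.subset (symOn_finite hAfin)
    intro g hg; exact (Subgroup.mem_inf.mp hg).1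
  have hQiex : ∀ i, ∃ Q, IsSylowOf p Q (SX (Xs i)) := by
    intro i
    have hfin : ((SX (Xs i) : Subgroup (Equiv.Perm ℕ)) : Set (Equiv.Perm ℕ)).Finite := by
      apply Set.Finite.subset (symOn_finite (hαfin i))
      intro g hg; exact (Subgroup.mem_inf.mp hg).1
    obtain ⟨Q, hQ, -⟩ := exists_isSylowOf_ge hfin bot_le (IsPGroup.of_bot (p := p) (G := Equiv.Perm ℕ))
    exact ⟨Q, hQ⟩
  choose Qi hQi using hQiex
  have hQisupp : ∀ i, ssupp ((Qi i : Set (Equiv.Perm ℕ))) = ssupp (Xs i) :=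
    fun i => hexact i (Qi i) (hQi i)
  have hQisym : ∀ i, Qi i ≤ symOn (ssupp (Xs i)) :=
    fun i g hg => (Subgroup.mem_inf.mp ((hQi i).1 hg)).1
  have hQiZ : ∀ i, Qi i ≤ SX Z := by
    intro i g hg
    refine Subgroup.mem_inf.mpr ⟨?_, ?_⟩
    · apply symOn_mono _ (hQisym i hg)
      rw [hAeq]; exact Set.subset_iUnion (fun j => ssupp (Xs j)) i
    · apply Subgroup.mem_centralizer_iff.mpr
      intro z hz
      obtain ⟨x, hx, rfl⟩ := (mem_listProd_ofFn Xs z).mp hz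
      have hcom : ∀ f ∈ List.ofFn x, Commute g f := by
        intro f hf
        obtain ⟨j, rfl⟩ := Set.mem_range.mp (List.mem_ofFn.mp hf)
        by_cases hij : j = i
        · subst hij
          have hcen := (Subgroup.mem_inf.mp ((hQi j).1 hg)).2
          exact (Subgroup.mem_centralizer_iff.mp hcen (x j) (hx j)).symm
        · apply commute_of_disjoint_psupp
          rw [(hXs j).2.1 (x j) (hx j)]
          apply Set.disjoint_of_subset_left (mem_symOn'.mp (hQisym i hg))
          exact hdisj i j (fun hcon => hij hcon.symm)
      exact (Commute.list_prod_right _ _ hcom).symm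
  have hRp : IsPGroup p ((⨆ i, Qi i : Subgroup (Equiv.Perm ℕ))) := by
    apply isPGroup_iSup_fin Qi (fun i => (hQi i).2.1)
    intro i j hij
    intro g hg
    apply Subgroup.mem_centralizer_iff.mpr
    intro a ha
    apply commute_of_disjoint_psupp
    apply Set.disjoint_of_subset_left (mem_symOn'.mp (hQisym i ha))
    apply Set.disjoint_of_subset_right (mem_symOn'.mp (hQisym j hg))
    exact hdisj i j hij
  have hRZ : (⨆ i, Qi i : Subgroup (Equiv.Perm ℕ)) ≤ SX Z := iSup_le hQiZ
  obtain ⟨Qs, hQs, hRQs⟩ := exists_isSylowOf_ge hSfin hRZ hRp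
  have hQiQs : ∀ i, Qi i ≤ Qs := fun i => le_trans (le_iSup Qi i) hRQs
  have hQssupp : ssupp (Qs : Set (Equiv.Perm ℕ)) = ssupp Z := by
    apply Set.eq_of_subset_of_subset
    · apply ssupp_subset_of_le_symOn
      intro g hg; exact (Subgroup.mem_inf.mp (hQs.1 hg)).1
    · rw [hAeq]
      apply Set.iUnion_subset
      intro i
      rw [← hQisupp i]
      exact ssupp_mono (fun g hg => hQiQs i hg)
  constructor
  · -- exactness
    intro Q hQ
    obtain ⟨g, hgS, hgQ⟩ := isSylowOf_conj hSfin hQs hQ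
    have hgsym : g ∈ symOn (ssupp Z) := (Subgroup.mem_inf.mp hgS).1
    apply Set.eq_of_subset_of_subset
    · apply ssupp_subset_of_le_symOn
      intro a ha; exact (Subgroup.mem_inf.mp (hQ.1 ha)).1
    · intro ω hω
      have hη : g⁻¹ ω ∈ ssupp Z := symOn_maps_to ((symOn _).inv_mem hgsym) hω
      rw [← hQssupp] at hη
      obtain ⟨τ, hτ, hτη⟩ := mem_ssupp_iff.mp hη
      refine mem_ssupp_iff.mpr ⟨g * τ * g⁻¹, ?_, ?_⟩
      · apply (hgQ _).mpr
        have he : g⁻¹ * (g * τ * g⁻¹) * g = τ := by group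
        rw [he]; exact hτ
      · rw [mem_psupp]
        simp only [Equiv.Perm.mul_apply]
        intro hcon
        apply hτη
        have := congrArg (g⁻¹ : Equiv.Perm ℕ) hcon
        simpa using this
  · -- closedness
    intro Q hQ
    obtain ⟨g, hgS, hgQ⟩ := isSylowOf_conj hSfin hQs hQ
    have hgsym : g ∈ symOn (ssupp Z) := (Subgroup.mem_inf.mp hgS).1
    have hgcent := Subgroup.mem_centralizer_iff.mp (Subgroup.mem_inf.mp hgS).2
    apply Set.eq_of_subset_of_subset
    · rintro ξ ⟨hξC, hξXi⟩
      have hξC' : ∀ a ∈ Q, a * ξ = ξ * a := Subgroup.mem_centralizer_iff.mp hξC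
      set ξ' : Equiv.Perm ℕ := g⁻¹ * ξ * g with hξ'
      have hξ'C : ∀ i, ∀ ρ ∈ Qi i, ρ * ξ' = ξ' * ρ := by
        intro i ρ hρ
        have hρQs : ρ ∈ Qs := hQiQs i hρ
        have hσQ : g * ρ * g⁻¹ ∈ Q := by
          apply (hgQ _).mpr
          have he : g⁻¹ * (g * ρ * g⁻¹) * g = ρ := by group
          rw [he]; exact hρQs
        have hcm : (g * ρ * g⁻¹) * ξ = ξ * (g * ρ * g⁻¹) := hξC' _ hσQ
        calc ρ * ξ' = g⁻¹ * ((g * ρ * g⁻¹) * ξ) * g := by rw [hξ']; group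
          _ = g⁻¹ * (ξ * (g * ρ * g⁻¹)) * g := by rw [hcm]
          _ = ξ' * ρ := by rw [hξ']; group
      have hξ'Xi : ξ' ∈ Xi Z := by
        simp only [Xi, Set.mem_iUnion, conjSet, Set.mem_image] at hξXi ⊢
        obtain ⟨k, hk, z, hzz, hkz⟩ := hξXi
        refine ⟨k * g, (symOn _).mul_mem hk hgsym, z, hzz, ?_⟩
        show (k * g)⁻¹ * z * (k * g) = ξ'
        rw [hξ', ← hkz]
        show (k * g)⁻¹ * z * (k * g) = g⁻¹ * (k⁻¹ * z * k) * g
        group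
      have hξ'Z : ξ' ∈ Z := closed_core hq hXs hdisj hclosed Qi hQi hQisupp hξ'C hξ'Xi
      have hcom := hgcent ξ' hξ'Z
      have hfin : ξ = ξ' := by
        have h1 : ξ = g * ξ' * g⁻¹ := by rw [hξ']; group
        rw [h1, ← hcom]
        group
      rw [hfin]; exact hξ'Z
    · intro z hzZ
      refine ⟨?_, ?_⟩
      · apply Subgroup.mem_centralizer_iff.mpr
        intro a ha
        have haS : a ∈ SX Z := hQ.1 ha
        exact (Subgroup.mem_centralizer_iff.mp (Subgroup.mem_inf.mp haS).2 z hzZ).symm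
      · simp only [Xi, Set.mem_iUnion, conjSet, Set.mem_image]
        refine ⟨1, (symOn _).one_mem, z, hzZ, ?_⟩
        show 1⁻¹ * z * 1 = z
        group

end FPS
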